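/- arXiv:1609.06792 — 6 statements merged into one kernel-verified Lean document; each statement's English description precedes it below -/
import Mathlib

section
/- For the linear advection equation u_t + u_x = 0 on a periodic domain, the semi-discrete central DG scheme with dissipation satisfies the energy decay identity: (1/2) d/dt ∫_Ω ((u_h^C)² + (u_h^D)²) dx = −(1/τ_max) ∫_Ω (u_h^C − u_h^D)² dx ≤ 0. -/
/-!
On a single cell `(a, b)` the approximation `u(s)` is a polynomial of degree `≤ K`, and the scheme
prescribes the time derivative at `t` of its moments `∫ u(s) p` for every such `p`; nothing else is
known about the dependence on `s`. Since the Gram matrix of `1, x, …, x^K` on `(a, b)` is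
positive definite, `∫ q²` is bounded by the squared moments of `q`, so
`∫ (u(s) - u(t))² = o(s - t)` and `d/dt ∫ u² = 2 d/dt ∫ u(s) u(t)`: the cell energy changes at twice
the rate of the scheme tested with `u(t)` itself.

Summed over the primal and dual cells, the dissipative parts of these rates add up to
`-(1/τ) ∫ (u^C - u^D)²`. On each half cell both approximations are polynomials, and integrating
by parts there shows that the flux terms of the primal cell `j` and the dual cell `j + 1/2` add up
to `F j - F (j + 1)`, where `F j` is `halfCellFlux` on the left half of the primal cell `j`. The sum
telescopes to `F 0 - F N`, which vanishes because the polynomials on the cells `N` and `0` are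
translates of each other.
-/

open intervalIntegral Polynomial Set Asymptotics Topology Matrix
open MeasureTheory (volume)

theorem hasDerivAt_zero_of_abs_le_sum_sq {ι : Type*} (s : Finset ι) {f : ℝ → ℝ}
    {g : ι → ℝ → ℝ} {t C : ℝ} (hft : f t = 0)
    (hf : ∀ x, |f x| ≤ C * ∑ i ∈ s, (g i x - g i t) ^ 2)
    (hg : ∀ i ∈ s, DifferentiableAt ℝ (g i) t) : HasDerivAt f 0 t := by
  have hsq : ∀ i ∈ s, (fun x => (g i x - g i t) ^ 2) =o[𝓝 t] (· - t) := fun i hi =>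
    ((hg i hi).hasDerivAt.isBigO_sub.pow 2).trans_isLittleO <| by
      simpa using isLittleO_pow_sub_sub t one_lt_two
  have hbound : f =O[𝓝 t] fun x => ∑ i ∈ s, (g i x - g i t) ^ 2 := by
    refine .of_bound C <| .of_forall fun x => ?_
    rw [Real.norm_eq_abs, Real.norm_eq_abs,
      abs_of_nonneg (s.sum_nonneg fun i _ => sq_nonneg (g i x - g i t))]
    exact hf x
  rw [hasDerivAt_iff_isLittleO]
  simpa [hft] using hbound.trans_isLittleO (IsLittleO.fun_sum hsq)

theorem intervalIntegrable_of_eqOn_Ioo {f g : ℝ → ℝ} {a b : ℝ} (hab : a ≤ b) (hg : Continuous g)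
    (hfg : EqOn f g (Ioo a b)) : IntervalIntegrable f volume a b :=
  (hg.intervalIntegrable a b).congr_uIoo (uIoo_of_le hab ▸ hfg.symm)

theorem integral_eq_add_of_eqOn_Ioo {f g₁ g₂ : ℝ → ℝ} {a b c : ℝ} (hab : a ≤ b) (hbc : b ≤ c)
    (hg₁ : Continuous g₁) (hg₂ : Continuous g₂) (h₁ : EqOn f g₁ (Ioo a b))
    (h₂ : EqOn f g₂ (Ioo b c)) : ∫ x in a..c, f x = (∫ x in a..b, g₁ x) + ∫ x in b..c, g₂ x := by
  rw [← integral_add_adjacent_intervals (intervalIntegrable_of_eqOn_Ioo hab hg₁ h₁)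
    (intervalIntegrable_of_eqOn_Ioo hbc hg₂ h₂), integral_congr_Ioo_of_le hab h₁,
    integral_congr_Ioo_of_le hbc h₂]

theorem intervalIntegral.integral_congr_comp_of_eqOn_Ioo {a b : ℝ} (hab : a ≤ b) {v w : ℝ → ℝ}
    (hvw : ∀ x ∈ Ioo a b, v x = w x) (F : ℝ → ℝ → ℝ) :
    ∫ x in a..b, F (v x) x = ∫ x in a..b, F (w x) x :=
  integral_congr_Ioo_of_le hab fun x hx => by simp only [hvw x hx]

theorem Function.Periodic.intervalIntegral_eq_sum {f : ℝ → ℝ} {N : ℕ} {h : ℝ} (θ : ℝ)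
    (hf : Function.Periodic f (N * h))
    (hint : ∀ j < N, IntervalIntegrable f volume ((j + θ) * h) ((j + θ + 1) * h)) :
    ∫ x in 0..N * h, f x = ∑ j ∈ Finset.range N, ∫ x in (j + θ) * h..(j + θ + 1) * h, f x := by
  have hsum := sum_integral_adjacent_intervals (a := fun j : ℕ => (j + θ) * h) (n := N)
    fun j hj => by simpa [add_right_comm] using hint j hj
  simp only [Nat.cast_add, Nat.cast_one, Nat.cast_zero, zero_add, add_right_comm _ (1 : ℝ)] at hsum
  rw [hsum, add_mul, add_comm, hf.intervalIntegral_add_eq (θ * h) 0, zero_add]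

theorem Polynomial.eq_zero_of_integral_sq_eq_zero {p : ℝ[X]} {a b : ℝ} (hab : a < b)
    (h : ∫ x in a..b, p.eval x ^ 2 = 0) : p = 0 := by
  by_contra hp
  obtain ⟨c, hc, hpc⟩ : ∃ c ∈ Icc a b, ¬ p.IsRoot c :=
    ((Icc_infinite hab).sdiff (p.finite_setOfPred_isRoot hp)).nonempty
  exact (integral_pos hab (p.continuous.pow 2).continuousOn (fun x _ => sq_nonneg _)
    ⟨c, hc, pow_two_pos_of_ne_zero hpc⟩).ne' h

theorem Polynomial.integral_eval_mul_derivative (p q : ℝ[X]) (a b : ℝ) :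
    ∫ x in a..b, p.eval x * q.derivative.eval x =
      p.eval b * q.eval b - p.eval a * q.eval a - ∫ x in a..b, p.derivative.eval x * q.eval x :=
  integral_mul_deriv_eq_deriv_mul (fun x _ => p.hasDerivAt x) (fun x _ => q.hasDerivAt x)
    (p.derivative.continuous.intervalIntegrable a b)
    (q.derivative.continuous.intervalIntegrable a b)

theorem Polynomial.comp_X_add_C_eq_of_eqOn {f : ℝ → ℝ} {L a b : ℝ} (hab : a < b)
    (hf : Function.Periodic f L) {p q : ℝ[X]} (hp : EqOn f p.eval (Ioo (a + L) (b + L)))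
    (hq : EqOn f q.eval (Ioo a b)) : p.comp (X + C L) = q := by
  refine eq_of_infinite_eval_eq _ _ ((Ioo_infinite hab).mono fun x hx => ?_)
  have hxL : x + L ∈ Ioo (a + L) (b + L) := ⟨by linarith [hx.1], by linarith [hx.2]⟩
  simp [← hp hxL, hf x, hq hx]

theorem exists_inner_le_mul_norm_sq {E : Type*} [NormedAddCommGroup E] [InnerProductSpace ℝ E]
    [FiniteDimensional ℝ E] {f : E →ₗ[ℝ] E} (hf : LinearMap.ker f = ⊥) :
    ∃ C, ∀ v, inner ℝ v (f v) ≤ C * ‖f v‖ ^ 2 := by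
  obtain ⟨K, -, hK⟩ := f.exists_antilipschitzWith hf
  refine ⟨K, fun v => ?_⟩
  calc inner ℝ v (f v) ≤ ‖v‖ * ‖f v‖ := real_inner_le_norm v (f v)
    _ ≤ K * ‖f v‖ * ‖f v‖ := by
      gcongr
      exact ZeroHomClass.bound_of_antilipschitz f hK v
    _ = K * ‖f v‖ ^ 2 := by ring

noncomputable def momentMatrix (a b : ℝ) (n : ℕ) : Matrix (Fin n) (Fin n) ℝ :=
  Matrix.of fun i j => ∫ x in a..b, x ^ (i + j : ℕ)

section momentMatrix

variable {a b : ℝ} {n : ℕ}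

theorem momentMatrix_mulVec (c : Fin n → ℝ) (i : Fin n) :
    (momentMatrix a b n *ᵥ c) i = ∫ x in a..b, (∑ j, c j * x ^ (j : ℕ)) * x ^ (i : ℕ) := by
  simp_rw [Finset.sum_mul]
  rw [integral_finsetSum fun j _ => Continuous.intervalIntegrable (by fun_prop) _ _]
  simp [Matrix.mulVec, dotProduct, momentMatrix, pow_add, mul_comm, mul_left_comm,
    ← integral_const_mul]

theorem dotProduct_momentMatrix_mulVec (c : Fin n → ℝ) :
    c ⬝ᵥ (momentMatrix a b n *ᵥ c) = ∫ x in a..b, (∑ j, c j * x ^ (j : ℕ)) ^ 2 := by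
  simp_rw [dotProduct, momentMatrix_mulVec, ← integral_const_mul]
  rw [← integral_finsetSum fun j _ => Continuous.intervalIntegrable (by fun_prop) _ _]
  simp_rw [sq, Finset.mul_sum]
  congr 1 with x
  exact Finset.sum_congr rfl fun j _ => by ring

theorem ker_toLpLin_momentMatrix (hab : a < b) :
    LinearMap.ker (Matrix.toLpLin 2 2 (momentMatrix a b n)) = ⊥ := by
  rw [LinearMap.ker_eq_bot']
  intro c hc
  set p : ℝ[X] := ∑ j, C (c j) * X ^ (j : ℕ)
  have hp : p = 0 := by
    refine p.eq_zero_of_integral_sq_eq_zero hab ?_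
    simpa [p, eval_finsetSum, dotProduct_momentMatrix_mulVec] using
      congr_arg (fun v => WithLp.ofLp c ⬝ᵥ WithLp.ofLp v) hc
  ext i
  simpa [p, finsetSum_coeff, coeff_C_mul_X_pow, Fin.val_inj] using congr_arg (coeff · i) hp

theorem exists_integral_sq_le_sum_sq_moments (n : ℕ) {a b : ℝ} (hab : a < b) :
    ∃ C, ∀ q : ℝ[X], q.natDegree < n →
      ∫ x in a..b, q.eval x ^ 2 ≤ C * ∑ i : Fin n, (∫ x in a..b, q.eval x * x ^ (i : ℕ)) ^ 2 := by
  obtain ⟨C, hC⟩ := exists_inner_le_mul_norm_sq (ker_toLpLin_momentMatrix (n := n) hab)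
  refine ⟨C, fun q hq => ?_⟩
  have hq_eval : ∀ x, q.eval x = ∑ j : Fin n, q.coeff j * x ^ (j : ℕ) := fun x => by
    rw [eval_eq_sum_range' hq, Fin.sum_univ_eq_sum_range (fun j => q.coeff j * x ^ j)]
  simpa [EuclideanSpace.real_norm_sq_eq, EuclideanSpace.inner_toLp_toLp, Matrix.toLpLin_toLp,
    dotProduct_comm, dotProduct_momentMatrix_mulVec, momentMatrix_mulVec, ← hq_eval]
    using hC (WithLp.toLp 2 fun j => q.coeff j)

end momentMatrix

section CellEnergy

variable {K : ℕ} {a b t : ℝ} {u : ℝ → ℝ → ℝ} {D : ℝ[X] → ℝ} {q : ℝ[X]}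

theorem hasDerivAt_integral_sub_sq_of_moments (hab : a < b)
    (hu : ∀ s, ∃ p : ℝ[X], p.natDegree ≤ K ∧ ∀ x ∈ Ioo a b, u s x = p.eval x)
    (hD : ∀ p : ℝ[X], p.natDegree ≤ K →
      HasDerivAt (fun s => ∫ x in a..b, u s x * p.eval x) (D p) t)
    (hq : q.natDegree ≤ K) (hqu : ∀ x ∈ Ioo a b, u t x = q.eval x) :
    HasDerivAt (fun s => ∫ x in a..b, (u s x - q.eval x) ^ 2) 0 t := by
  obtain ⟨C, hC⟩ := exists_integral_sq_le_sum_sq_moments (K + 1) hab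
  set m : Fin (K + 1) → ℝ → ℝ := fun i s => ∫ x in a..b, u s x * x ^ (i : ℕ)
  have hm (i : Fin (K + 1)) : HasDerivAt (m i) (D (X ^ (i : ℕ))) t := by
    simpa using hD (X ^ (i : ℕ)) ((natDegree_X_pow_le _).trans (Nat.lt_succ_iff.mp i.2))
  refine hasDerivAt_zero_of_abs_le_sum_sq Finset.univ (C := C) ?_ (fun s => ?_)
    fun i _ => (hm i).differentiableAt
  · simp [integral_congr_comp_of_eqOn_Ioo hab.le hqu fun v x => (v - q.eval x) ^ 2]
  obtain ⟨p, hp, hpu⟩ := hu s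
  have hmoment (i : Fin (K + 1)) :
      m i s - m i t = ∫ x in a..b, (p - q).eval x * x ^ (i : ℕ) := by
    simp only [m, integral_congr_comp_of_eqOn_Ioo hab.le hpu fun v x => v * x ^ (i : ℕ),
      integral_congr_comp_of_eqOn_Ioo hab.le hqu fun v x => v * x ^ (i : ℕ), eval_sub, sub_mul]
    rw [integral_sub (Continuous.intervalIntegrable (by fun_prop) _ _)
      (Continuous.intervalIntegrable (by fun_prop) _ _)]
  have hpq : (p - q).natDegree < K + 1 :=
    Nat.lt_succ_of_le ((natDegree_sub_le p q).trans (max_le hp hq))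
  rw [integral_congr_comp_of_eqOn_Ioo hab.le hpu fun v x => (v - q.eval x) ^ 2,
    abs_of_nonneg (integral_nonneg hab.le fun x _ => sq_nonneg _)]
  simpa only [hmoment, eval_sub] using hC (p - q) hpq

theorem hasDerivAt_integral_sq_of_moments (hab : a < b)
    (hu : ∀ s, ∃ p : ℝ[X], p.natDegree ≤ K ∧ ∀ x ∈ Ioo a b, u s x = p.eval x)
    (hD : ∀ p : ℝ[X], p.natDegree ≤ K →
      HasDerivAt (fun s => ∫ x in a..b, u s x * p.eval x) (D p) t)
    (hq : q.natDegree ≤ K) (hqu : ∀ x ∈ Ioo a b, u t x = q.eval x) :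
    HasDerivAt (fun s => ∫ x in a..b, u s x ^ 2) (2 * D q) t := by
  have hsplit (s : ℝ) : ∫ x in a..b, u s x ^ 2 = (∫ x in a..b, (u s x - q.eval x) ^ 2)
      + 2 * (∫ x in a..b, u s x * q.eval x) - ∫ x in a..b, q.eval x ^ 2 := by
    obtain ⟨p, -, hpu⟩ := hu s
    simp only [integral_congr_comp_of_eqOn_Ioo hab.le hpu fun v _ => v ^ 2,
      integral_congr_comp_of_eqOn_Ioo hab.le hpu fun v x => (v - q.eval x) ^ 2,
      integral_congr_comp_of_eqOn_Ioo hab.le hpu fun v x => v * q.eval x]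
    rw [← integral_const_mul, ← integral_add (Continuous.intervalIntegrable (by fun_prop) _ _)
      (Continuous.intervalIntegrable (by fun_prop) _ _), ← integral_sub
      (Continuous.intervalIntegrable (by fun_prop) _ _)
      (Continuous.intervalIntegrable (by fun_prop) _ _)]
    congr 1 with x
    ring
  simpa [funext hsplit] using
    ((hasDerivAt_integral_sub_sq_of_moments hab hu hD hq hqu).add
      ((hD q hq).const_mul 2)).sub_const (∫ x in a..b, q.eval x ^ 2)

end CellEnergy

def IsPiecewisePolynomial (δ : ℝ) (f : ℝ → ℝ) : Prop :=
  ∀ k : ℤ, ∃ p : ℝ[X], EqOn f p.eval (Ioo (k * δ) ((k + 1) * δ))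

namespace IsPiecewisePolynomial

variable {δ : ℝ} {f g : ℝ → ℝ}

theorem sub (hf : IsPiecewisePolynomial δ f) (hg : IsPiecewisePolynomial δ g) :
    IsPiecewisePolynomial δ fun x => f x - g x := fun k => by
  obtain ⟨p, hp⟩ := hf k
  obtain ⟨q, hq⟩ := hg k
  exact ⟨p - q, fun x hx => by simp [hp hx, hq hx]⟩

theorem mul (hf : IsPiecewisePolynomial δ f) (hg : IsPiecewisePolynomial δ g) :
    IsPiecewisePolynomial δ fun x => f x * g x := fun k => by
  obtain ⟨p, hp⟩ := hf k
  obtain ⟨q, hq⟩ := hg k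
  exact ⟨p * q, fun x hx => by simp [hp hx, hq hx]⟩

theorem pow (hf : IsPiecewisePolynomial δ f) (n : ℕ) :
    IsPiecewisePolynomial δ fun x => f x ^ n := fun k => by
  obtain ⟨p, hp⟩ := hf k
  exact ⟨p ^ n, fun x hx => by simp [hp hx]⟩

theorem intervalIntegrable (hf : IsPiecewisePolynomial δ f) (hδ : 0 < δ) (m : ℤ) (n : ℕ) :
    IntervalIntegrable f volume (m * δ) ((m + n) * δ) := by
  induction n with
  | zero => simp
  | succ n ih =>
    obtain ⟨p, hp⟩ := hf (m + n)
    refine ih.trans (intervalIntegrable_of_eqOn_Ioo (by push_cast; nlinarith) p.continuous ?_)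
    push_cast at hp ⊢
    simpa [add_assoc] using hp

theorem of_doubled_mesh (hδ : 0 < δ) (r : ℤ)
    (hf : ∀ j : ℤ, ∃ p : ℝ[X], EqOn f p.eval (Ioo ((2 * j + r) * δ) ((2 * j + r + 2) * δ))) :
    IsPiecewisePolynomial δ f := fun k => by
  obtain ⟨p, hp⟩ := hf ((k - r) / 2)
  refine ⟨p, hp.mono (Ioo_subset_Ioo ?_ ?_)⟩
  · have : ((2 * ((k - r) / 2) + r : ℤ) : ℝ) ≤ k := by exact_mod_cast (by omega)
    push_cast at this
    nlinarith
  · have : (k + 1 : ℝ) ≤ ((2 * ((k - r) / 2) + r + 2 : ℤ) : ℝ) := by exact_mod_cast (by omega)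
    push_cast at this
    nlinarith

end IsPiecewisePolynomial

/-- The right-hand side of the scheme on the cell `(a, b)` for the approximation `u`, coupled to the
approximation `w` on the other mesh, tested against `p`. -/
noncomputable def cdgRate (τ a b : ℝ) (u w : ℝ → ℝ) (p : ℝ[X]) : ℝ :=
  (1 / τ) * (∫ x in a..b, (w x - u x) * p.eval x) + (∫ x in a..b, w x * p.derivative.eval x)
    - w b * p.eval b + w a * p.eval a

noncomputable def halfCellFlux (q p : ℝ[X]) (a b : ℝ) : ℝ :=
  q.eval a * p.eval a + ∫ x in a..b, q.eval x * p.derivative.eval x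

theorem halfCellFlux_comp_X_add_C (q p : ℝ[X]) (a b L : ℝ) :
    halfCellFlux (q.comp (X + C L)) (p.comp (X + C L)) a b = halfCellFlux q p (a + L) (b + L) := by
  simp [halfCellFlux, derivative_comp, ← integral_comp_add_right]

theorem cdgRate_add_cdgRate_eq {U V : ℝ → ℝ} {p₀ p₁ q₀ q₁ : ℝ[X]} {τ a b c d : ℝ} (hab : a < b)
    (hbc : b < c) (hcd : c < d) (hU₀ : EqOn U p₀.eval (Ioo a c)) (hU₁ : EqOn U p₁.eval (Ioc c d))
    (hV₀ : EqOn V q₀.eval (Ico a b)) (hV₁ : EqOn V q₁.eval (Ioo b d)) :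
    cdgRate τ a c U V p₀ + cdgRate τ b d V U q₁ =
      (1 / τ) * ((∫ x in a..c, (V x - U x) * U x) + ∫ x in b..d, (U x - V x) * V x)
        + halfCellFlux q₀ p₀ a b - halfCellFlux q₁ p₁ c d := by
  have hVp₀ := integral_eq_add_of_eqOn_Ioo (f := fun x => V x * p₀.derivative.eval x)
    (g₁ := fun x => q₀.eval x * p₀.derivative.eval x)
    (g₂ := fun x => q₁.eval x * p₀.derivative.eval x) hab.le hbc.le (by fun_prop) (by fun_prop)
    (fun x hx => by simp only [hV₀ (Ioo_subset_Ico_self hx)])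
    (fun x hx => by simp only [hV₁ ⟨hx.1, hx.2.trans hcd⟩])
  have hUq₁ := integral_eq_add_of_eqOn_Ioo (f := fun x => U x * q₁.derivative.eval x)
    (g₁ := fun x => q₁.derivative.eval x * p₀.eval x)
    (g₂ := fun x => q₁.derivative.eval x * p₁.eval x) hbc.le hcd.le (by fun_prop) (by fun_prop)
    (fun x hx => by simp only [hU₀ ⟨hab.trans hx.1, hx.2⟩, mul_comm])
    (fun x hx => by simp only [hU₁ (Ioo_subset_Ioc_self hx), mul_comm])
  have hdissU : ∫ x in a..c, (V x - U x) * p₀.eval x = ∫ x in a..c, (V x - U x) * U x :=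
    integral_congr_Ioo_of_le (hab.trans hbc).le fun x hx => by simp only [hU₀ hx]
  have hdissV : ∫ x in b..d, (U x - V x) * q₁.eval x = ∫ x in b..d, (U x - V x) * V x :=
    integral_congr_Ioo_of_le (hbc.trans hcd).le fun x hx => by simp only [hV₁ hx]
  have hVa := hV₀ (left_mem_Ico.mpr hab)
  have hVc := hV₁ ⟨hbc, hcd⟩
  have hUb := hU₀ ⟨hab, hbc⟩
  have hUd := hU₁ (right_mem_Ioc.mpr hcd)
  simp only [cdgRate, halfCellFlux, hdissU, hdissV, hVp₀, hUq₁, hVa, hVc, hUb, hUd]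
  linear_combination integral_eval_mul_derivative q₁ p₀ b c
    + integral_eval_mul_derivative q₁ p₁ c d

section DualMeshes

variable {N : ℕ} {h τ : ℝ} {f U V : ℝ → ℝ} {P Q : ℤ → ℝ[X]}

theorem isPiecewisePolynomial_of_primal (hh : 0 < h)
    (hU : ∀ j : ℤ, ∃ p : ℝ[X], ∀ x ∈ Ioo ((j : ℝ) * h) ((j + 1 : ℝ) * h), U x = p.eval x) :
    IsPiecewisePolynomial (h / 2) U :=
  .of_doubled_mesh (half_pos hh) 0 fun j => by
    obtain ⟨p, hp⟩ := hU j
    exact ⟨p, fun x hx => hp x (by convert hx using 2 <;> push_cast <;> ring)⟩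

theorem isPiecewisePolynomial_of_dual (hh : 0 < h)
    (hV : ∀ j : ℤ, ∃ p : ℝ[X], ∀ x ∈ Ioo (((j : ℝ) + 1 / 2) * h) (((j : ℝ) + 3 / 2) * h),
      V x = p.eval x) :
    IsPiecewisePolynomial (h / 2) V :=
  .of_doubled_mesh (half_pos hh) 1 fun j => by
    obtain ⟨p, hp⟩ := hV j
    exact ⟨p, fun x hx => hp x (by convert hx using 2 <;> push_cast <;> ring)⟩

theorem IsPiecewisePolynomial.intervalIntegrable_period (hh : 0 < h)
    (hf : IsPiecewisePolynomial (h / 2) f) : IntervalIntegrable f volume 0 (N * h) := by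
  convert hf.intervalIntegrable (half_pos hh) 0 (2 * N) using 1 <;> push_cast <;> ring

theorem integral_eq_sum_primal (hh : 0 < h) (hf : IsPiecewisePolynomial (h / 2) f)
    (hper : Function.Periodic f (N * h)) :
    ∫ x in 0..N * h, f x =
      ∑ j ∈ Finset.range N, ∫ x in ((j : ℤ) * h)..(((j : ℤ) + 1 : ℝ) * h), f x := by
  rw [hper.intervalIntegral_eq_sum 0 fun j _ => ?_]
  · simp
  convert hf.intervalIntegrable (half_pos hh) (2 * j) 2 using 1 <;> push_cast <;> ring

theorem integral_eq_sum_dual (hh : 0 < h) (hf : IsPiecewisePolynomial (h / 2) f)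
    (hper : Function.Periodic f (N * h)) :
    ∫ x in 0..N * h, f x =
      ∑ j ∈ Finset.range N,
        ∫ x in (((j : ℤ) + 1 / 2 : ℝ) * h)..(((j : ℤ) + 3 / 2 : ℝ) * h), f x := by
  rw [hper.intervalIntegral_eq_sum (1 / 2) fun j _ => ?_]
  · refine Finset.sum_congr rfl fun j _ => ?_
    norm_num [add_assoc]
  convert hf.intervalIntegrable (half_pos hh) (2 * j + 1) 2 using 1 <;> push_cast <;> ring

theorem cdgRate_add_cdgRate_cell (hh : 0 < h)
    (hP : ∀ j : ℤ, EqOn U (P j).eval (Ioo ((j : ℝ) * h) ((j + 1 : ℝ) * h)))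
    (hQ : ∀ j : ℤ, EqOn V (Q j).eval (Ioo (((j : ℝ) + 1 / 2) * h) (((j : ℝ) + 3 / 2) * h)))
    (j : ℤ) :
    cdgRate τ (j * h) ((j + 1 : ℝ) * h) U V (P j)
        + cdgRate τ ((j + 1 / 2 : ℝ) * h) ((j + 3 / 2 : ℝ) * h) V U (Q j) =
      (1 / τ) * ((∫ x in (j * h)..((j + 1 : ℝ) * h), (V x - U x) * U x)
          + ∫ x in ((j + 1 / 2 : ℝ) * h)..((j + 3 / 2 : ℝ) * h), (U x - V x) * V x)
        + (halfCellFlux (Q (j - 1)) (P j) (j * h) ((j + 1 / 2 : ℝ) * h)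
          - halfCellFlux (Q (j + 1 - 1)) (P (j + 1)) (((j + 1 : ℤ) : ℝ) * h)
            ((((j + 1 : ℤ) : ℝ) + 1 / 2) * h)) := by
  have hU₁ : EqOn U (P (j + 1)).eval (Ioc ((j + 1 : ℝ) * h) ((j + 3 / 2 : ℝ) * h)) :=
    fun x hx => hP (j + 1) ⟨by push_cast; linarith [hx.1], by push_cast; nlinarith [hx.2]⟩
  have hV₀ : EqOn V (Q (j - 1)).eval (Ico (j * h) ((j + 1 / 2 : ℝ) * h)) :=
    fun x hx => hQ (j - 1) ⟨by push_cast; nlinarith [hx.1], by push_cast; linarith [hx.2]⟩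
  rw [cdgRate_add_cdgRate_eq (by nlinarith) (by nlinarith) (by nlinarith) (hP j) hU₁ hV₀ (hQ j)]
  push_cast
  ring_nf

theorem halfCellFlux_period (hh : 0 < h) (hUper : Function.Periodic U (N * h))
    (hVper : Function.Periodic V (N * h))
    (hP : ∀ j : ℤ, EqOn U (P j).eval (Ioo ((j : ℝ) * h) ((j + 1 : ℝ) * h)))
    (hQ : ∀ j : ℤ, EqOn V (Q j).eval (Ioo (((j : ℝ) + 1 / 2) * h) (((j : ℝ) + 3 / 2) * h))) :
    halfCellFlux (Q (N - 1)) (P N) ((N : ℤ) * h) ((((N : ℤ) : ℝ) + 1 / 2) * h) =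
      halfCellFlux (Q (0 - 1)) (P 0) (((0 : ℤ) : ℝ) * h) ((((0 : ℤ) : ℝ) + 1 / 2) * h) := by
  have hPN : (P N).comp (X + C (N * h)) = P 0 :=
    comp_X_add_C_eq_of_eqOn (a := 0) (b := h) hh hUper
      (by convert hP N using 2 <;> push_cast <;> ring) (by simpa using hP 0)
  have hQN : (Q (N - 1)).comp (X + C (N * h)) = Q (-1) :=
    comp_X_add_C_eq_of_eqOn (a := -h / 2) (b := h / 2) (by linarith) hVper
      (by convert hQ (N - 1) using 2 <;> push_cast <;> ring)
      (by convert hQ (-1) using 2 <;> push_cast <;> ring)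
  rw [zero_sub, ← hPN, ← hQN, halfCellFlux_comp_X_add_C]
  push_cast
  ring_nf

theorem sum_cdgRate_primal_add_dual (hh : 0 < h) (hUper : Function.Periodic U (N * h))
    (hVper : Function.Periodic V (N * h))
    (hP : ∀ j : ℤ, EqOn U (P j).eval (Ioo ((j : ℝ) * h) ((j + 1 : ℝ) * h)))
    (hQ : ∀ j : ℤ, EqOn V (Q j).eval (Ioo (((j : ℝ) + 1 / 2) * h) (((j : ℝ) + 3 / 2) * h))) :
    ∑ j ∈ Finset.range N, (cdgRate τ ((j : ℤ) * h) (((j : ℤ) + 1 : ℝ) * h) U V (P j)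
        + cdgRate τ (((j : ℤ) + 1 / 2 : ℝ) * h) (((j : ℤ) + 3 / 2 : ℝ) * h) V U (Q j)) =
      -(1 / τ) * ∫ x in 0..N * h, (U x - V x) ^ 2 := by
  have hUpw := isPiecewisePolynomial_of_primal hh fun j => ⟨P j, hP j⟩
  have hVpw := isPiecewisePolynomial_of_dual hh fun j => ⟨Q j, hQ j⟩
  have htel := Finset.sum_range_sub' (fun k : ℕ => halfCellFlux (Q ((k : ℤ) - 1)) (P k)
    (((k : ℤ) : ℝ) * h) ((((k : ℤ) : ℝ) + 1 / 2) * h)) N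
  simp only [Nat.cast_add, Nat.cast_one, Nat.cast_zero] at htel
  simp_rw [cdgRate_add_cdgRate_cell (τ := τ) hh hP hQ]
  rw [Finset.sum_add_distrib, htel, halfCellFlux_period hh hUper hVper hP hQ, sub_self, add_zero,
    ← Finset.mul_sum, Finset.sum_add_distrib,
    ← integral_eq_sum_primal hh ((hVpw.sub hUpw).mul hUpw) (fun x => by simp [hUper x, hVper x]),
    ← integral_eq_sum_dual hh ((hUpw.sub hVpw).mul hVpw) (fun x => by simp [hUper x, hVper x]),
    ← integral_add (((hVpw.sub hUpw).mul hUpw).intervalIntegrable_period hh)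
      (((hUpw.sub hVpw).mul hVpw).intervalIntegrable_period hh), neg_mul, ← mul_neg,
    ← intervalIntegral.integral_neg]
  congr 2 with x
  ring

theorem integral_sq_add_sq_eq_sum (hh : 0 < h) (hU : IsPiecewisePolynomial (h / 2) U)
    (hV : IsPiecewisePolynomial (h / 2) V) (hUper : Function.Periodic U (N * h))
    (hVper : Function.Periodic V (N * h)) :
    ∫ x in 0..N * h, (U x ^ 2 + V x ^ 2) =
      (∑ j ∈ Finset.range N, ∫ x in ((j : ℤ) * h)..(((j : ℤ) + 1 : ℝ) * h), U x ^ 2)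
        + ∑ j ∈ Finset.range N,
          ∫ x in (((j : ℤ) + 1 / 2 : ℝ) * h)..(((j : ℤ) + 3 / 2 : ℝ) * h), V x ^ 2 := by
  rw [integral_add ((hU.pow 2).intervalIntegrable_period hh)
      ((hV.pow 2).intervalIntegrable_period hh),
    integral_eq_sum_primal hh (hU.pow 2) fun x => by simp [hUper x],
    integral_eq_sum_dual hh (hV.pow 2) fun x => by simp [hVper x]]

end DualMeshes

theorem central_dg_energy_decay_general
    (K N : ℕ) (h τ : ℝ) (hh : 0 < h) (hτ : 0 < τ)
    (uC uD : ℝ → ℝ → ℝ) (t : ℝ)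
    -- spatial periodicity with period N·h
    (hperC : ∀ s x, uC s (x + N * h) = uC s x)
    (hperD : ∀ s x, uD s (x + N * h) = uD s x)
    -- piecewise polynomial of degree ≤ K on the primal cells C_j = (j·h, (j+1)·h)
    (hpolyC : ∀ s : ℝ, ∀ j : ℤ, ∃ q : Polynomial ℝ, q.natDegree ≤ K ∧
      ∀ x ∈ Set.Ioo ((j : ℝ) * h) ((j + 1 : ℝ) * h), uC s x = q.eval x)
    -- piecewise polynomial of degree ≤ K on the dual cells D_{j+1/2} = ((j+1/2)·h, (j+3/2)·h)
    (hpolyD : ∀ s : ℝ, ∀ j : ℤ, ∃ q : Polynomial ℝ, q.natDegree ≤ K ∧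
      ∀ x ∈ Set.Ioo (((j : ℝ) + 1 / 2) * h) (((j : ℝ) + 3 / 2) * h), uD s x = q.eval x)
    -- semi-discrete CDG scheme for uC (flux f(u) = u), tested against every
    -- polynomial of degree ≤ K on each primal cell
    (hschemeC : ∀ j : ℤ, ∀ p : Polynomial ℝ, p.natDegree ≤ K →
      HasDerivAt (fun s => ∫ x in ((j : ℝ) * h)..((j + 1 : ℝ) * h), uC s x * p.eval x)
        ((1 / τ) * (∫ x in ((j : ℝ) * h)..((j + 1 : ℝ) * h), (uD t x - uC t x) * p.eval x)
          + (∫ x in ((j : ℝ) * h)..((j + 1 : ℝ) * h), uD t x * (p.derivative.eval x))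
          - uD t ((j + 1 : ℝ) * h) * p.eval ((j + 1 : ℝ) * h)
          + uD t ((j : ℝ) * h) * p.eval ((j : ℝ) * h)) t)
    -- semi-discrete CDG scheme for uD on the dual cells
    (hschemeD : ∀ j : ℤ, ∀ p : Polynomial ℝ, p.natDegree ≤ K →
      HasDerivAt (fun s => ∫ x in (((j : ℝ) + 1 / 2) * h)..(((j : ℝ) + 3 / 2) * h),
          uD s x * p.eval x)
        ((1 / τ) * (∫ x in (((j : ℝ) + 1 / 2) * h)..(((j : ℝ) + 3 / 2) * h),
            (uC t x - uD t x) * p.eval x)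
          + (∫ x in (((j : ℝ) + 1 / 2) * h)..(((j : ℝ) + 3 / 2) * h),
            uC t x * (p.derivative.eval x))
          - uC t (((j : ℝ) + 3 / 2) * h) * p.eval (((j : ℝ) + 3 / 2) * h)
          + uC t (((j : ℝ) + 1 / 2) * h) * p.eval (((j : ℝ) + 1 / 2) * h)) t) :
    HasDerivAt
      (fun s => (1 / 2) * ∫ x in (0 : ℝ)..(N * h), ((uC s x) ^ 2 + (uD s x) ^ 2))
      (-(1 / τ) * ∫ x in (0 : ℝ)..(N * h), (uC t x - uD t x) ^ 2) t
    ∧ -(1 / τ) * (∫ x in (0 : ℝ)..(N * h), (uC t x - uD t x) ^ 2) ≤ 0 := by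
  choose qC hqC_deg hqC using hpolyC
  choose qD hqD_deg hqD using hpolyD
  have hcellC (j : ℤ) : HasDerivAt (fun s => ∫ x in (j * h)..((j + 1 : ℝ) * h), uC s x ^ 2)
      (2 * cdgRate τ (j * h) ((j + 1 : ℝ) * h) (uC t) (uD t) (qC t j)) t :=
    hasDerivAt_integral_sq_of_moments (by nlinarith) (fun s => ⟨qC s j, hqC_deg s j, hqC s j⟩)
      (hschemeC j) (hqC_deg t j) (hqC t j)
  have hcellD (j : ℤ) : HasDerivAt
      (fun s => ∫ x in ((j + 1 / 2 : ℝ) * h)..((j + 3 / 2 : ℝ) * h), uD s x ^ 2)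
      (2 * cdgRate τ ((j + 1 / 2 : ℝ) * h) ((j + 3 / 2 : ℝ) * h) (uD t) (uC t) (qD t j)) t :=
    hasDerivAt_integral_sq_of_moments (by nlinarith) (fun s => ⟨qD s j, hqD_deg s j, hqD s j⟩)
      (hschemeD j) (hqD_deg t j) (hqD t j)
  have henergy s := congr_arg (1 / 2 * ·) (integral_sq_add_sq_eq_sum hh
    (isPiecewisePolynomial_of_primal hh fun j => ⟨qC s j, hqC s j⟩)
    (isPiecewisePolynomial_of_dual hh fun j => ⟨qD s j, hqD s j⟩) (hperC s) (hperD s))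
  refine ⟨?_, mul_nonpos_of_nonpos_of_nonneg (by simp [hτ.le])
    (integral_nonneg (by positivity) fun x _ => sq_nonneg _)⟩
  rw [funext henergy, ← sum_cdgRate_primal_add_dual hh (hperC t) (hperD t) (hqC t) (hqD t)]
  refine (((HasDerivAt.fun_sum fun (j : ℕ) _ => hcellC j).fun_add
    (HasDerivAt.fun_sum fun (j : ℕ) _ => hcellD j)).const_mul (1 / 2)).congr_deriv ?_
  rw [← Finset.sum_add_distrib, Finset.mul_sum]
  exact Finset.sum_congr rfl fun j _ => by ring

/-- Energy decay identity for the semi-discrete central DG scheme applied to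
`u_t + u_x = 0` on a periodic domain `[0, N·h]`.  The two piecewise-polynomial
(degree ≤ K) approximations `uC`, `uD` live on mutually dual uniform meshes and
satisfy the semi-discrete weak formulations against all polynomial test
functions; then `(1/2) d/dt ∫_Ω ((u_h^C)² + (u_h^D)²) = -(1/τ) ∫_Ω (u_h^C - u_h^D)² ≤ 0`. -/
theorem central_dg_energy_decay
    (K N : ℕ) (hN : 0 < N) (h τ : ℝ) (hh : 0 < h) (hτ : 0 < τ)
    (uC uD : ℝ → ℝ → ℝ) (t : ℝ)
    -- spatial periodicity with period N·h
    (hperC : ∀ s x, uC s (x + N * h) = uC s x)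
    (hperD : ∀ s x, uD s (x + N * h) = uD s x)
    -- piecewise polynomial of degree ≤ K on the primal cells C_j = (j·h, (j+1)·h)
    (hpolyC : ∀ s : ℝ, ∀ j : ℤ, ∃ q : Polynomial ℝ, q.natDegree ≤ K ∧
      ∀ x ∈ Set.Ioo ((j : ℝ) * h) ((j + 1 : ℝ) * h), uC s x = q.eval x)
    -- piecewise polynomial of degree ≤ K on the dual cells D_{j+1/2} = ((j+1/2)·h, (j+3/2)·h)
    (hpolyD : ∀ s : ℝ, ∀ j : ℤ, ∃ q : Polynomial ℝ, q.natDegree ≤ K ∧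
      ∀ x ∈ Set.Ioo (((j : ℝ) + 1 / 2) * h) (((j : ℝ) + 3 / 2) * h), uD s x = q.eval x)
    -- semi-discrete CDG scheme for uC (flux f(u) = u), tested against every
    -- polynomial of degree ≤ K on each primal cell
    (hschemeC : ∀ j : ℤ, ∀ p : Polynomial ℝ, p.natDegree ≤ K →
      HasDerivAt (fun s => ∫ x in ((j : ℝ) * h)..((j + 1 : ℝ) * h), uC s x * p.eval x)
        ((1 / τ) * (∫ x in ((j : ℝ) * h)..((j + 1 : ℝ) * h), (uD t x - uC t x) * p.eval x)
          + (∫ x in ((j : ℝ) * h)..((j + 1 : ℝ) * h), uD t x * (p.derivative.eval x))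
          - uD t ((j + 1 : ℝ) * h) * p.eval ((j + 1 : ℝ) * h)
          + uD t ((j : ℝ) * h) * p.eval ((j : ℝ) * h)) t)
    -- semi-discrete CDG scheme for uD on the dual cells
    (hschemeD : ∀ j : ℤ, ∀ p : Polynomial ℝ, p.natDegree ≤ K →
      HasDerivAt (fun s => ∫ x in (((j : ℝ) + 1 / 2) * h)..(((j : ℝ) + 3 / 2) * h),
          uD s x * p.eval x)
        ((1 / τ) * (∫ x in (((j : ℝ) + 1 / 2) * h)..(((j : ℝ) + 3 / 2) * h),
            (uC t x - uD t x) * p.eval x)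
          + (∫ x in (((j : ℝ) + 1 / 2) * h)..(((j : ℝ) + 3 / 2) * h),
            uC t x * (p.derivative.eval x))
          - uC t (((j : ℝ) + 3 / 2) * h) * p.eval (((j : ℝ) + 3 / 2) * h)
          + uC t (((j : ℝ) + 1 / 2) * h) * p.eval (((j : ℝ) + 1 / 2) * h)) t) :
    HasDerivAt
      (fun s => (1 / 2) * ∫ x in (0 : ℝ)..(N * h), ((uC s x) ^ 2 + (uD s x) ^ 2))
      (-(1 / τ) * ∫ x in (0 : ℝ)..(N * h), (uC t x - uD t x) ^ 2) t
    ∧ -(1 / τ) * (∫ x in (0 : ℝ)..(N * h), (uC t x - uD t x) ^ 2) ≤ 0 :=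
  central_dg_energy_decay_general K N h τ hh hτ uC uD t hperC hperD hpolyC hpolyD hschemeC hschemeD
end

section
/- Let A, B, C be the 4×4 matrices A = (1/(4h))·[[0,0,5,−1],[0,0,−1,5],[0,0,0,0],[0,0,0,0]], B = (1/(4h))·[[0,0,−5,1],[0,0,1,−5],[5,−1,0,0],[−1,5,0,0]], C = (1/(4h))·[[0,0,0,0],[0,0,0,0],[−5,1,0,0],[1,−5,0,0]]. Then the eigenvalues of G(α) = A e^{−iα} + B + C e^{iα} are ±(1/h)√(2cos α − 2) and ±(3/(2h))√(2cos α − 2). -/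
/-!
Writing `E = e^{iα}`, the matrix `G` has zero diagonal `2 × 2` blocks and off-diagonal blocks
`a M` and `b M`, where `M = [[5, -1], [-1, 5]]`, `a = (E⁻¹ - 1)/(4h)` and `b = (1 - E)/(4h)`.
Its determinant is therefore `∏ (λ² - a b μ²)` over the eigenvalues `μ = 4, 6` of `M`, and
`a b = (2 cos α - 2)/(16 h²) = s²/(16 h²)`.
-/

open Complex Matrix

theorem det_fin_four_antidiagBlocks_circulant {R : Type*} [CommRing R] (a b p q lam : R) :
    !![-lam, 0, a * p, a * q; 0, -lam, a * q, a * p;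
      b * p, b * q, -lam, 0; b * q, b * p, 0, -lam].det =
      (lam ^ 2 - a * b * (p + q) ^ 2) * (lam ^ 2 - a * b * (p - q) ^ 2) := by
  simp [det_succ_row_zero, Fin.sum_univ_succ, Fin.succAbove]
  ring

theorem exp_neg_mul_I_sub_one_mul_one_sub_exp_mul_I (α : ℝ) :
    (exp (-α * I) - 1) * (1 - exp (α * I)) = 2 * Real.cos α - 2 := by
  have hinv : exp (-α * I) * exp (α * I) = 1 := by rw [← exp_add]; simp
  rw [ofReal_cos, cos]
  linear_combination (-1 : ℂ) * hinv

theorem cdg_amplification_sub_smul_one (h E E' lam : ℂ) :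
    E' • ((1 / (4 * h) : ℂ) • !![0, 0, 5, -1; 0, 0, -1, 5; 0, 0, 0, 0; 0, 0, 0, 0])
      + (1 / (4 * h) : ℂ) • !![0, 0, -5, 1; 0, 0, 1, -5; 5, -1, 0, 0; -1, 5, 0, 0]
      + E • ((1 / (4 * h) : ℂ) • !![0, 0, 0, 0; 0, 0, 0, 0; -5, 1, 0, 0; 1, -5, 0, 0])
      - lam • (1 : Matrix (Fin 4) (Fin 4) ℂ) =
      let a := (E' - 1) / (4 * h)
      let b := (1 - E) / (4 * h)
      !![-lam, 0, a * 5, a * (-1); 0, -lam, a * (-1), a * 5;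
        b * 5, b * (-1), -lam, 0; b * (-1), b * 5, 0, -lam] := by
  ext i j
  fin_cases i <;> fin_cases j <;> simp <;> ring

theorem cdg_amplification_eigenvalues_general (h α : ℝ)
    (A B C : Matrix (Fin 4) (Fin 4) ℂ)
    (hA : A = (1 / (4 * h) : ℂ) •
      !![0, 0, 5, -1; 0, 0, -1, 5; 0, 0, 0, 0; 0, 0, 0, 0])
    (hB : B = (1 / (4 * h) : ℂ) •
      !![0, 0, -5, 1; 0, 0, 1, -5; 5, -1, 0, 0; -1, 5, 0, 0])
    (hC : C = (1 / (4 * h) : ℂ) •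
      !![0, 0, 0, 0; 0, 0, 0, 0; -5, 1, 0, 0; 1, -5, 0, 0])
    (G : Matrix (Fin 4) (Fin 4) ℂ)
    (hG : G = Complex.exp (-(α : ℂ) * Complex.I) • A + B + Complex.exp ((α : ℂ) * Complex.I) • C)
    (s : ℂ) (hs : s ^ 2 = 2 * Real.cos α - 2) :
    ∀ lam : ℂ, (G - lam • (1 : Matrix (Fin 4) (Fin 4) ℂ)).det = 0 ↔
      lam = s / h ∨ lam = -(s / h) ∨ lam = 3 * s / (2 * h) ∨ lam = -(3 * s / (2 * h)) := by
  intro lam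
  have hab : (exp (-α * I) - 1) / (4 * h) * ((1 - exp (α * I)) / (4 * h)) = (s / (4 * h)) ^ 2 := by
    rw [div_mul_div_comm, exp_neg_mul_I_sub_one_mul_one_sub_exp_mul_I, ← hs]
    ring
  have hdet : (G - lam • (1 : Matrix (Fin 4) (Fin 4) ℂ)).det =
      (lam ^ 2 - (s / h) ^ 2) * (lam ^ 2 - (3 * s / (2 * h)) ^ 2) := by
    rw [hG, hA, hB, hC, cdg_amplification_sub_smul_one, det_fin_four_antidiagBlocks_circulant, hab]
    ring
  simp only [hdet, mul_eq_zero, sub_eq_zero, sq_eq_sq_iff_eq_or_eq_neg, or_assoc]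

/-- The eigenvalues of the Fourier amplification matrix
`G(α) = A e^{-iα} + B + C e^{iα}` of the `P¹`-based central DG scheme
without numerical dissipation are `±(1/h)√(2cos α - 2)` and
`±(3/(2h))√(2cos α - 2)` (where `s` denotes a fixed branch of the
complex square root of `2cos α - 2`). -/
theorem cdg_amplification_eigenvalues (h α : ℝ) (hh : 0 < h)
    (A B C : Matrix (Fin 4) (Fin 4) ℂ)
    (hA : A = (1 / (4 * h) : ℂ) •
      !![0, 0, 5, -1; 0, 0, -1, 5; 0, 0, 0, 0; 0, 0, 0, 0])
    (hB : B = (1 / (4 * h) : ℂ) •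
      !![0, 0, -5, 1; 0, 0, 1, -5; 5, -1, 0, 0; -1, 5, 0, 0])
    (hC : C = (1 / (4 * h) : ℂ) •
      !![0, 0, 0, 0; 0, 0, 0, 0; -5, 1, 0, 0; 1, -5, 0, 0])
    (G : Matrix (Fin 4) (Fin 4) ℂ)
    (hG : G = Complex.exp (-(α : ℂ) * Complex.I) • A + B + Complex.exp ((α : ℂ) * Complex.I) • C)
    (s : ℂ) (hs : s ^ 2 = 2 * Real.cos α - 2) :
    ∀ lam : ℂ, (G - lam • (1 : Matrix (Fin 4) (Fin 4) ℂ)).det = 0 ↔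
      lam = s / h ∨ lam = -(s / h) ∨ lam = 3 * s / (2 * h) ∨ lam = -(3 * s / (2 * h)) :=
  cdg_amplification_eigenvalues_general h α A B C hA hB hC G hG s hs
end

section
/- For the amplification matrix G(α) of the dissipation-free P¹ central DG scheme, the vector r₁ = ( (e^{−iα}−1)/√(2cos α−2), (e^{−iα}−1)/√(2cos α−2), 1, 1 )ᵀ is an eigenvector of G(α) with eigenvalue (1/h)√(2cos α − 2), whenever 2cos α − 2 ≠ 0. -/
open Complex Matrix

/-!
With `z = e^{-iα}` and `w = e^{iα}`, `G(α) = (z A₀ + B₀ + w C₀) / (4h)` with integer matrices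
`A₀, B₀, C₀`. On `r = ((z-1)/s, (z-1)/s, 1, 1)` the first two rows of `z A₀ + B₀ + w C₀` give
`4(z-1) = 4s (z-1)/s`, the last two give `4(1-w)(z-1)/s`, and `(1-w)(z-1) = z + w - 2 = s²`
because `zw = 1`.
-/

theorem centralDG_symbol_mulVec_eq {K : Type*} [Field K] {z w s : K} (hzw : z * w = 1)
    (hs : s ^ 2 = z + w - 2) (hs0 : s ≠ 0) :
    (z • !![0, 0, 5, -1; 0, 0, -1, 5; 0, 0, 0, 0; 0, 0, 0, 0]
        + !![0, 0, -5, 1; 0, 0, 1, -5; 5, -1, 0, 0; -1, 5, 0, 0]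
        + w • !![0, 0, 0, 0; 0, 0, 0, 0; -5, 1, 0, 0; 1, -5, 0, 0]) *ᵥ
      ![(z - 1) / s, (z - 1) / s, 1, 1]
      = (4 * s) • ![(z - 1) / s, (z - 1) / s, 1, 1] := by
  ext i
  fin_cases i <;>
    simp only [mulVec, dotProduct, Fin.sum_univ_four, Pi.smul_apply, smul_eq_mul, smul_of,
      smul_cons, smul_empty, of_add_of, add_cons, empty_add_empty, head_cons, tail_cons, of_apply,
      Matrix.add_apply, cons_val', cons_val, cons_val_zero, cons_val_one, cons_val_fin_one,
      Fin.zero_eta, Fin.mk_one, Fin.reduceFinMk, Fin.isValue, mul_zero, mul_one, mul_neg, zero_mul,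
      add_zero, zero_add] <;>
    field_simp
  · ring
  · ring
  · linear_combination (-4 : K) * hzw - 4 * hs
  · linear_combination (-4 : K) * hzw - 4 * hs

theorem cdg_amplification_eigenvector_general (h α : ℝ)
    (A B C : Matrix (Fin 4) (Fin 4) ℂ)
    (hA : A = (1 / (4 * h) : ℂ) •
      !![0, 0, 5, -1; 0, 0, -1, 5; 0, 0, 0, 0; 0, 0, 0, 0])
    (hB : B = (1 / (4 * h) : ℂ) •
      !![0, 0, -5, 1; 0, 0, 1, -5; 5, -1, 0, 0; -1, 5, 0, 0])
    (hC : C = (1 / (4 * h) : ℂ) •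
      !![0, 0, 0, 0; 0, 0, 0, 0; -5, 1, 0, 0; 1, -5, 0, 0])
    (G : Matrix (Fin 4) (Fin 4) ℂ)
    (hG : G = Complex.exp (-(α : ℂ) * Complex.I) • A + B + Complex.exp ((α : ℂ) * Complex.I) • C)
    (s : ℂ) (hs : s ^ 2 = 2 * Real.cos α - 2)
    (hs0 : (2 : ℂ) * Real.cos α - 2 ≠ 0) :
    G.mulVec ![(Complex.exp (-(α : ℂ) * Complex.I) - 1) / s,
               (Complex.exp (-(α : ℂ) * Complex.I) - 1) / s, 1, 1]
      = (s / h) • ![(Complex.exp (-(α : ℂ) * Complex.I) - 1) / s,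
                    (Complex.exp (-(α : ℂ) * Complex.I) - 1) / s, 1, 1] := by
  subst hA hB hC hG
  have hzw : exp (-α * I) * exp (α * I) = 1 := by
    rw [← exp_add, neg_mul, neg_add_cancel, exp_zero]
  have hs_exp : s ^ 2 = exp (-α * I) + exp (α * I) - 2 := by
    rw [hs, ofReal_cos, cos, neg_mul]
    ring
  have hs_ne : s ≠ 0 := by
    rintro rfl
    exact hs0 (by rw [← hs]; ring)
  rw [smul_comm _ (1 / (4 * h) : ℂ), smul_comm _ (1 / (4 * h) : ℂ), ← smul_add, ← smul_add,
    smul_mulVec, centralDG_symbol_mulVec_eq hzw hs_exp hs_ne, smul_smul]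
  congr 1
  ring

/-- `r₁ = ((e^{-iα}-1)/s, (e^{-iα}-1)/s, 1, 1)ᵀ`, with `s` a square root of
`2cos α - 2 ≠ 0`, is an eigenvector of the dissipation-free `P¹` central DG
amplification matrix `G(α)` with eigenvalue `s/h`. -/
theorem cdg_amplification_eigenvector (h α : ℝ) (hh : 0 < h)
    (A B C : Matrix (Fin 4) (Fin 4) ℂ)
    (hA : A = (1 / (4 * h) : ℂ) •
      !![0, 0, 5, -1; 0, 0, -1, 5; 0, 0, 0, 0; 0, 0, 0, 0])
    (hB : B = (1 / (4 * h) : ℂ) •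
      !![0, 0, -5, 1; 0, 0, 1, -5; 5, -1, 0, 0; -1, 5, 0, 0])
    (hC : C = (1 / (4 * h) : ℂ) •
      !![0, 0, 0, 0; 0, 0, 0, 0; -5, 1, 0, 0; 1, -5, 0, 0])
    (G : Matrix (Fin 4) (Fin 4) ℂ)
    (hG : G = Complex.exp (-(α : ℂ) * Complex.I) • A + B + Complex.exp ((α : ℂ) * Complex.I) • C)
    (s : ℂ) (hs : s ^ 2 = 2 * Real.cos α - 2)
    (hs0 : (2 : ℂ) * Real.cos α - 2 ≠ 0) :
    G.mulVec ![(Complex.exp (-(α : ℂ) * Complex.I) - 1) / s,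
               (Complex.exp (-(α : ℂ) * Complex.I) - 1) / s, 1, 1]
      = (s / h) • ![(Complex.exp (-(α : ℂ) * Complex.I) - 1) / s,
                    (Complex.exp (-(α : ℂ) * Complex.I) - 1) / s, 1, 1] :=
  cdg_amplification_eigenvector_general h α A B C hA hB hC G hG s hs hs0
end

section
/- Let λ₂(α) = (1/τ)(−2 − μαi − (4/3)μ²α²) + O(α³) with τ, μ > 0. Then for the forward Euler amplification factor with Δt = τ, |1 + τλ₂| = 1 + (11/6)μ²α² + O(α³); in particular, treating the expansion exactly as g(α) = 1 + τλ₂ where λ₂ = (1/τ)(−2 − μαi − (4/3)μ²α²), one has |g(α)|² = 1 + (11/3)μ²α² + O(α³) as α → 0, hence |g(α)| > 1 for all sufficiently small α ≠ 0. -/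
open Filter Asymptotics Topology

/- The amplification factor is `-(1 + (4/3)μ²α²) - iμα`, so `|g(α)|²` is exactly
`1 + (11/3)μ²α² + (16/9)μ⁴α⁴`: the quadratic term is positive for `μ ≠ 0`, and the
quartic remainder is `O(|α|³)` near `0`. -/

theorem pow_four_isBigO_abs_pow_three : (fun x : ℝ => x ^ 4) =O[𝓝 0] fun x => |x| ^ 3 := by
  simpa only [norm_pow, Real.norm_eq_abs] using
    (isLittleO_pow_pow (𝕜 := ℝ) (by norm_num : 3 < 4)).isBigO.norm_right

theorem norm_sq_cdg_euler_amplification (μ α : ℝ) :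
    ‖1 + (-2 - μ * α * Complex.I - (4 / 3) * μ ^ 2 * α ^ 2 : ℂ)‖ ^ 2
      = 1 + (11 / 3) * μ ^ 2 * α ^ 2 + (16 / 9) * μ ^ 4 * α ^ 4 := by
  have hsplit : (1 + (-2 - μ * α * Complex.I - (4 / 3) * μ ^ 2 * α ^ 2) : ℂ)
      = ((-(1 + (4 / 3) * μ ^ 2 * α ^ 2) : ℝ) : ℂ) + ((-(μ * α) : ℝ) : ℂ) * Complex.I := by
    push_cast
    ring
  rw [Complex.sq_norm, hsplit, Complex.normSq_add_mul_I]
  ring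

/-- Forward Euler amplification factor of the new `P¹`-based central DG scheme:
with `g(α) = 1 + (-2 - iμα - (4/3)μ²α²)`, one has
`|g(α)|² = 1 + (11/3)μ²α² + O(α³)` as `α → 0`, hence `|g(α)| > 1`
for all sufficiently small `α ≠ 0` (instability). -/
theorem new_cdg_euler_unstable (μ : ℝ) (hμ : 0 < μ) :
    let g : ℝ → ℂ := fun α =>
      1 + (-2 - μ * α * Complex.I - (4 / 3) * μ ^ 2 * α ^ 2)
    ((fun α : ℝ => ‖g α‖ ^ 2 - (1 + (11 / 3) * μ ^ 2 * α ^ 2))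
      =O[nhds (0 : ℝ)] fun α : ℝ => |α| ^ 3) ∧
    (∀ᶠ α in nhdsWithin (0 : ℝ) {0}ᶜ, 1 < ‖g α‖) := by
  intro g
  have hg : ∀ α, ‖g α‖ ^ 2 = 1 + (11 / 3) * μ ^ 2 * α ^ 2 + (16 / 9) * μ ^ 4 * α ^ 4 :=
    norm_sq_cdg_euler_amplification μ
  constructor
  · refine (pow_four_isBigO_abs_pow_three.const_mul_left ((16 / 9) * μ ^ 4)).congr_left
      fun α => ?_
    rw [hg]
    ring
  · filter_upwards [self_mem_nhdsWithin] with α (hα : α ≠ 0)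
    rw [← one_lt_sq_iff₀ (norm_nonneg _), hg]
    have : 0 < (11 / 3) * μ ^ 2 * α ^ 2 + (16 / 9) * μ ^ 4 * α ^ 4 := by positivity
    linarith
end

section
/- Let λ = (1/τ)(−2 − μαi − (4/3)μ²α²) with τ, μ > 0 and α real, and let g(α) = 1 + τλ + (τλ)²/2 be the second-order Runge–Kutta amplification factor. Then |g(α)|² = 1 + (8/3)μ²α² + O(α³) as α → 0; in particular |g(α)| > 1 for all sufficiently small α ≠ 0, so the scheme is unstable for every μ > 0. -/
open Filter Asymptotics

/-! Writing `g(α) = a(α) + i b(α)` with `a = 1 + (5/6)μ²α² + (8/9)μ⁴α⁴` and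
`b = μα + (4/3)μ³α³`, the quantity `a² + b² - 1 - (8/3)μ²α²` is `α⁴` times a
polynomial in `α`, which gives the expansion. Instability needs no expansion:
`|g(α)| ≥ Re g(α) = a(α) > 1` as soon as `μα ≠ 0`. -/

theorem isBigO_pow_mul_of_continuousAt {𝕜 : Type*} [NormedField 𝕜] {Q : 𝕜 → 𝕜}
    (hQ : ContinuousAt Q 0) {m n : ℕ} (h : m < n) :
    (fun x => x ^ n * Q x) =O[nhds 0] fun x => ‖x‖ ^ m := by
  have hpow : (fun x : 𝕜 => x ^ n) =O[nhds 0] fun x => x ^ m := (isLittleO_pow_pow h).isBigO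
  have hQ1 : Q =O[nhds 0] fun _ => (1 : 𝕜) := hQ.tendsto.isBigO_one 𝕜
  simpa only [mul_one, ← norm_pow] using (hpow.mul hQ1).norm_right

noncomputable def newCdgRk2Factor (μ α : ℝ) : ℂ :=
  let z : ℂ := -2 - μ * α * Complex.I - (4 / 3) * μ ^ 2 * α ^ 2
  1 + z + z ^ 2 / 2

theorem newCdgRk2Factor_eq (μ α : ℝ) :
    newCdgRk2Factor μ α = ⟨1 + 5/6 * μ^2 * α^2 + 8/9 * μ^4 * α^4, μ * α + 4/3 * μ^3 * α^3⟩ := by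
  rw [Complex.mk_eq_add_mul_I, newCdgRk2Factor]
  push_cast
  linear_combination ((μ : ℂ) ^ 2 * (α : ℂ) ^ 2 / 2) * Complex.I_sq

theorem norm_sq_newCdgRk2Factor_sub (μ α : ℝ) :
    ‖newCdgRk2Factor μ α‖ ^ 2 - (1 + 8/3 * μ^2 * α^2)
      = α^4 * (185/36 * μ^4 + 88/27 * μ^6 * α^2 + 64/81 * μ^8 * α^4) := by
  rw [Complex.sq_norm, newCdgRk2Factor_eq, Complex.normSq_mk]
  ring

theorem one_lt_norm_newCdgRk2Factor {μ α : ℝ} (hμ : μ ≠ 0) (hα : α ≠ 0) :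
    1 < ‖newCdgRk2Factor μ α‖ :=
  calc 1 < 1 + 5/6 * μ^2 * α^2 + 8/9 * μ^4 * α^4 := by
        have : 0 < μ^2 * α^2 := by positivity
        nlinarith [pow_two_nonneg (μ^2 * α^2)]
    _ = (newCdgRk2Factor μ α).re := by rw [newCdgRk2Factor_eq]
    _ ≤ ‖newCdgRk2Factor μ α‖ := Complex.re_le_norm _

/-- Second-order Runge–Kutta amplification factor of the new `P¹`-based central
DG scheme: with `τλ = z = -2 - iμα - (4/3)μ²α²` and `g = 1 + z + z²/2`, one has
`|g(α)|² = 1 + (8/3)μ²α² + O(α³)` as `α → 0`; in particular `|g(α)| > 1` for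
all sufficiently small `α ≠ 0`, so the scheme is unstable for every `μ > 0`. -/
theorem new_cdg_rk2_unstable (μ : ℝ) (hμ : 0 < μ) :
    let z : ℝ → ℂ := fun α => -2 - μ * α * Complex.I - (4 / 3) * μ ^ 2 * α ^ 2
    let g : ℝ → ℂ := fun α => 1 + z α + (z α) ^ 2 / 2
    ((fun α : ℝ => ‖g α‖ ^ 2 - (1 + (8 / 3) * μ ^ 2 * α ^ 2))
      =O[nhds (0 : ℝ)] fun α : ℝ => |α| ^ 3) ∧
    (∀ᶠ α in nhdsWithin (0 : ℝ) {0}ᶜ, 1 < ‖g α‖) := by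
  intro z g
  have hg : g = newCdgRk2Factor μ := rfl
  refine ⟨?_, eventually_nhdsWithin_of_forall fun α hα => ?_⟩
  · simp only [hg, norm_sq_newCdgRk2Factor_sub, ← Real.norm_eq_abs]
    exact isBigO_pow_mul_of_continuousAt (by fun_prop) (by norm_num)
  · exact hg ▸ one_lt_norm_newCdgRk2Factor hμ.ne' hα
end

section
/- Let z = −2 − iμα − (4/3)μ²α² for real α and μ > 0. Then |1 + z + z²/2|² = 1 + (8/3)μ²α² + O(α³) as α → 0. -/
/-!
With `t = μα`, expanding real and imaginary parts gives the exact identity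
`|1 + z + z²/2|² = 1 + (8/3)t² + t⁴(185/36 + (88/27)t² + (64/81)t⁴)`:
the remainder is divisible by `α⁴`, hence `O(|α|³)` near `0`.
-/

open Filter Asymptotics Topology

theorem sq_norm_one_add_add_sq_div_two_eq (t : ℝ) :
    ‖1 + (-2 - Complex.I * t - 4 / 3 * t ^ 2) + (-2 - Complex.I * t - 4 / 3 * t ^ 2) ^ 2 / 2‖ ^ 2
      = 1 + 8 / 3 * t ^ 2 + t ^ 4 * (185 / 36 + 88 / 27 * t ^ 2 + 64 / 81 * t ^ 4) := by
  rw [Complex.sq_norm, Complex.normSq_apply]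
  simp only [pow_two, Complex.add_re, Complex.one_re, Complex.sub_re, Complex.neg_re,
    Complex.re_ofNat, Complex.mul_re, Complex.I_re, Complex.ofReal_re, zero_mul, Complex.I_im,
    Complex.ofReal_im, mul_zero, sub_self, sub_zero, Complex.div_ofNat_re, Complex.div_ofNat_im,
    Complex.im_ofNat, zero_div, Complex.mul_im, add_zero, Complex.sub_im, Complex.neg_im, neg_zero,
    one_mul, zero_add, zero_sub, mul_neg, neg_mul, neg_neg, Complex.add_im, Complex.one_im]
  ring

theorem isBigO_pow_mul_norm_pow {𝕜 : Type*} [NormedDivisionRing 𝕜] {m n : ℕ} (hnm : n < m)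
    {h : 𝕜 → 𝕜} {c : 𝕜} (hh : Tendsto h (𝓝 0) (𝓝 c)) :
    (fun x => x ^ m * h x) =O[𝓝 0] fun x => ‖x‖ ^ n := by
  have hpow : (fun x : 𝕜 => x ^ m) =O[𝓝 0] fun x => ‖x‖ ^ n := by
    simpa only [norm_pow] using (isLittleO_pow_pow (𝕜 := 𝕜) hnm).isBigO.norm_right
  simpa only [mul_one] using hpow.mul (hh.isBigO_one ℝ)

theorem rk2_amplification_modulus_expansion_general (μ : ℝ) :
    let z : ℝ → ℂ := fun α => -2 - Complex.I * (μ * α) - (4 / 3) * μ ^ 2 * α ^ 2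
    (fun α : ℝ =>
        (‖1 + z α + (z α) ^ 2 / 2‖) ^ 2 - (1 + (8 / 3) * μ ^ 2 * α ^ 2))
      =O[nhds (0 : ℝ)] fun α : ℝ => |α| ^ 3 := by
  intro z
  have hremainder : ∀ α, (‖1 + z α + (z α) ^ 2 / 2‖) ^ 2 - (1 + (8 / 3) * μ ^ 2 * α ^ 2)
      = α ^ 4 * (μ ^ 4 * (185 / 36 + 88 / 27 * (μ * α) ^ 2 + 64 / 81 * (μ * α) ^ 4)) := by
    intro α
    have hz : z α = -2 - Complex.I * ↑(μ * α) - 4 / 3 * ↑(μ * α) ^ 2 := by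
      simp only [z]
      push_cast
      ring
    rw [hz, sq_norm_one_add_add_sq_div_two_eq]
    ring
  have hbounded : Continuous fun α : ℝ =>
      μ ^ 4 * (185 / 36 + 88 / 27 * (μ * α) ^ 2 + 64 / 81 * (μ * α) ^ 4) := by
    fun_prop
  simpa only [hremainder, Real.norm_eq_abs] using
    isBigO_pow_mul_norm_pow (by norm_num : 3 < 4) (hbounded.tendsto 0)

/-- With `z = -2 - iμα - (4/3)μ²α²`, the modulus squared of the RK2
amplification factor satisfies `|1 + z + z²/2|² = 1 + (8/3)μ²α² + O(α³)`
as `α → 0`. -/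
theorem rk2_amplification_modulus_expansion (μ : ℝ) (hμ : 0 < μ) :
    let z : ℝ → ℂ := fun α => -2 - Complex.I * (μ * α) - (4 / 3) * μ ^ 2 * α ^ 2
    (fun α : ℝ =>
        (‖1 + z α + (z α) ^ 2 / 2‖) ^ 2 - (1 + (8 / 3) * μ ^ 2 * α ^ 2))
      =O[nhds (0 : ℝ)] fun α : ℝ => |α| ^ 3 :=
  rk2_amplification_modulus_expansion_general μ
end
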